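/- Let f be holomorphic on 𝔻 with f(az + 1 - a) = f(z) for all z ∈ 𝔻 (eigenvalue λ = 1), a ∈ (0,1), and suppose the radial limit lim_{r→1⁻} f(r) exists. Then f is constant. -/

import Mathlib

/-!
The map `φ z = a z + (1 - a)` moves every `r ∈ (-1, 1)` along the real orbit
`φⁿ r = aⁿ r + (1 - aⁿ)`, which increases to `1`. Since `f` is constant on orbits, the radial
limit `L` at `1` equals `f r`; so `f = L` on the segment `(-1, 1)`, and the identity theorem
propagates this to the whole disk.
-/

open Filter Set Metric Topology

theorem iterate_affine {R : Type*} [CommRing R] (c z : R) (n : ℕ) :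
    (fun w => c * w + (1 - c))^[n] z = c ^ n * z + (1 - c ^ n) := by
  induction n with
  | zero => simp
  | succ n ih => rw [Function.iterate_succ_apply', ih]; ring

theorem apply_iterate_eq_of_mapsTo {X Y : Type*} {φ : X → X} {s : Set X} {f : X → Y}
    (hφ : MapsTo φ s s) (hf : ∀ z ∈ s, f (φ z) = f z) {z : X} (hz : z ∈ s) (n : ℕ) :
    f (φ^[n] z) = f z := by
  induction n with
  | zero => rfl
  | succ n ih => rw [Function.iterate_succ_apply', hf _ (hφ.iterate n hz), ih]

theorem mapsTo_affine_ball_one {a : ℝ} (ha : a ∈ Ioc (0 : ℝ) 1) :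
    MapsTo (fun z : ℂ => a * z + (1 - a)) (ball 0 1) (ball 0 1) := by
  intro z hz
  rw [mem_ball_zero_iff] at hz ⊢
  calc ‖(a : ℂ) * z + (1 - a)‖ ≤ a * ‖z‖ + (1 - a) := by
        refine (norm_add_le _ _).trans ?_
        rw [norm_mul, Complex.norm_real, Real.norm_of_nonneg ha.1.le, ← Complex.ofReal_one,
          ← Complex.ofReal_sub, Complex.norm_real, Real.norm_of_nonneg (sub_nonneg.2 ha.2)]
    _ < 1 := by nlinarith [ha.1]

theorem tendsto_pow_mul_add_one_sub_pow_nhdsLT {a r : ℝ} (ha : a ∈ Ioo (0 : ℝ) 1) (hr : r < 1) :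
    Tendsto (fun n : ℕ => a ^ n * r + (1 - a ^ n)) atTop (𝓝[<] 1) := by
  have hpow : Tendsto (fun n : ℕ => a ^ n) atTop (𝓝 0) :=
    tendsto_pow_atTop_nhds_zero_of_lt_one ha.1.le ha.2
  refine tendsto_nhdsWithin_of_tendsto_nhds_of_eventually_within _ ?_ (.of_forall fun n => ?_)
  · simpa using (hpow.mul_const r).add (tendsto_const_nhds.sub hpow)
  · have : 0 < a ^ n := pow_pos ha.1 n
    show a ^ n * r + (1 - a ^ n) < 1
    nlinarith

theorem AnalyticOnNhd.eqOn_of_preconnected_of_eventually_eq_ofReal {f g : ℂ → ℂ} {U : Set ℂ}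
    (hf : AnalyticOnNhd ℂ f U) (hg : AnalyticOnNhd ℂ g U) (hU : IsPreconnected U) {x₀ : ℝ}
    (hx₀ : (x₀ : ℂ) ∈ U) (hfg : ∀ᶠ r : ℝ in 𝓝 x₀, f r = g r) : EqOn f g U := by
  refine hf.eqOn_of_preconnected_of_frequently_eq hg hU hx₀ ?_
  have hofReal : Tendsto ((↑) : ℝ → ℂ) (𝓝[≠] x₀) (𝓝[≠] (x₀ : ℂ)) :=
    tendsto_nhdsWithin_of_tendsto_nhds_of_eventually_within _
      Complex.continuous_ofReal.continuousAt.continuousWithinAt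
      (eventually_mem_nhdsWithin.mono fun r hr => Complex.ofReal_injective.ne hr)
  exact hofReal.frequently (eventually_nhdsWithin_of_eventually_nhds hfg).frequently

theorem eq_of_comp_affine_eq_of_tendsto_nhdsLT {a : ℝ} (ha : a ∈ Ioo (0 : ℝ) 1) {f : ℂ → ℂ}
    (heq : ∀ z ∈ ball (0 : ℂ) 1, f (a * z + (1 - a)) = f z) {L : ℂ}
    (hL : Tendsto (fun r : ℝ => f r) (𝓝[<] 1) (𝓝 L)) {r : ℝ} (hr : r ∈ Ioo (-1 : ℝ) 1) :
    f r = L := by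
  have hr_ball : (r : ℂ) ∈ ball (0 : ℂ) 1 := by
    rw [mem_ball_zero_iff, Complex.norm_real, Real.norm_eq_abs, abs_lt]
    exact hr
  have horbit (n : ℕ) : f ((a ^ n * r + (1 - a ^ n) : ℝ) : ℂ) = f r := by
    have := apply_iterate_eq_of_mapsTo (mapsTo_affine_ball_one ⟨ha.1, ha.2.le⟩) heq hr_ball n
    rw [iterate_affine] at this
    push_cast
    exact this
  have hconv := hL.comp (tendsto_pow_mul_add_one_sub_pow_nhdsLT ha hr.2)
  simp only [Function.comp_def, horbit] at hconv
  exact tendsto_nhds_unique tendsto_const_nhds hconv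

/-- If `f ∘ φ_a = f` on 𝔻 and the radial limit of `f` at `1` exists, then `f`
is constant on 𝔻. -/
theorem eigenvalue_one_constant (a : ℝ) (ha : a ∈ Set.Ioo (0:ℝ) 1)
    (f : ℂ → ℂ)
    (hf : DifferentiableOn ℂ f (Metric.ball (0:ℂ) 1))
    (heq : ∀ z ∈ Metric.ball (0:ℂ) 1, f ((a:ℂ) * z + (1 - a)) = f z)
    (hlim : ∃ L : ℂ, Tendsto (fun r : ℝ => f r) (nhdsWithin 1 (Set.Iio (1:ℝ))) (nhds L)) :
    ∃ c : ℂ, Set.EqOn f (fun _ => c) (Metric.ball (0:ℂ) 1) := by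
  obtain ⟨L, hL⟩ := hlim
  refine ⟨L, (hf.analyticOnNhd isOpen_ball).eqOn_of_preconnected_of_eventually_eq_ofReal
    analyticOnNhd_const (convex_ball _ _).isPreconnected (x₀ := 0) (by simp) ?_⟩
  filter_upwards [Ioo_mem_nhds (by norm_num : (-1 : ℝ) < 0) one_pos] with r hr
  exact eq_of_comp_affine_eq_of_tendsto_nhdsLT ha heq hL hr
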